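/- Let L be a solvable Leibniz A-algebra and let B, D be ideals of L. Then B ⊆ Z_L(D) if and only if B ∩ D ⊆ Z(B) ∩ Z(D). -/

import Mathlib

/-!
If `B ∩ D` is central in `B` and in `D`, it is central in `U = B + D`, so
`[B, D] + [D, B] ⊆ B ∩ D ⊆ Z(U)`. Downward induction on `k + l`, starting from solvability,
shows that `B ∩ L^(k)` and `D ∩ L^(l)` annihilate each other; the inductive step concerns
subalgebras `G, H ⊆ U` with `[[G, G], H] = [[H, H], G] = 0` and `[G, H] + [H, G] ⊆ Z(U)`.

For `g ∈ G`, Fitting's lemma for right multiplication by `g` on the span of `g², g³, …` yields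
`c` in that span with `v = g + c` right-nilpotent; the subalgebra generated by `v` is then
nilpotent, hence abelian, so `[v, v] = 0`. As `c ∈ [G, G]` and `c` annihilates from the right,
with `w = h + e` built likewise we get `[v, w] = [g, h]` and `[w, v] = [h, g]`. Hence
`span {v, w} + Z(U)` has its square inside its centre, so it is nilpotent, hence abelian, and
`[g, h] = [h, g] = 0`.
-/

/-- A (right) Leibniz algebra structure on an `F`-vector space `L`:
a bilinear bracket satisfying `[x,[y,z]] = [[x,y],z] - [[x,z],y]`. -/
structure LeibnizAlg (F : Type*) (L : Type*) [Field F] [AddCommGroup L] [Module F L] where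
  bracket : L →ₗ[F] L →ₗ[F] L
  leibniz : ∀ x y z : L,
    bracket x (bracket y z) = bracket (bracket x y) z - bracket (bracket x z) y

namespace LeibnizAlg

variable {F : Type*} {L : Type*} [Field F] [AddCommGroup L] [Module F L]

/-- The product `[M, N]` of two subspaces: the span of all brackets `[m, n]`. -/
def prod (A : LeibnizAlg F L) (M N : Submodule F L) : Submodule F L :=
  Submodule.span F {z : L | ∃ m ∈ M, ∃ n ∈ N, z = A.bracket m n}

/-- A subalgebra: a subspace closed under the product. -/
def IsSubalgebra (A : LeibnizAlg F L) (S : Submodule F L) : Prop :=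
  A.prod S S ≤ S

/-- A (two-sided) ideal: `[I, L] ⊆ I` and `[L, I] ⊆ I`. -/
def IsIdeal (A : LeibnizAlg F L) (I : Submodule F L) : Prop :=
  A.prod I ⊤ ≤ I ∧ A.prod ⊤ I ≤ I

/-- Lower central series of a subspace `U`: `lcs U 0 = U = U¹`,
`lcs U k = U^(k+1)`, i.e. `lcs U (k+1) = [lcs U k, U]`. -/
def lcs (A : LeibnizAlg F L) (U : Submodule F L) : ℕ → Submodule F L
  | 0 => U
  | k + 1 => A.prod (lcs A U k) U

/-- `U` is nilpotent: `U^(n+1) = 0` for some `n`. -/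
def IsNilpotentSub (A : LeibnizAlg F L) (U : Submodule F L) : Prop :=
  ∃ n : ℕ, A.lcs U n = ⊥

/-- `U` is abelian: `[U, U] = 0`. -/
def IsAbelian (A : LeibnizAlg F L) (U : Submodule F L) : Prop :=
  A.prod U U = ⊥

/-- An `A`-algebra: every nilpotent subalgebra is abelian. -/
def IsAAlgebra (A : LeibnizAlg F L) : Prop :=
  ∀ U : Submodule F L, A.IsSubalgebra U → A.IsNilpotentSub U → A.IsAbelian U

/-- Derived series: `derSeries 0 = L`, `derSeries (k+1) = [derSeries k, derSeries k]`. -/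
def derSeries (A : LeibnizAlg F L) : ℕ → Submodule F L
  | 0 => ⊤
  | k + 1 => A.prod (derSeries A k) (derSeries A k)

/-- `L` is solvable: some term of the derived series vanishes. -/
def IsSolvable (A : LeibnizAlg F L) : Prop :=
  ∃ n : ℕ, A.derSeries n = ⊥

/-- The centralizer `Z_L(U)` of a subspace `U`. -/
def centralizer (A : LeibnizAlg F L) (U : Submodule F L) : Submodule F L where
  carrier := {x : L | ∀ u ∈ U, A.bracket x u = 0 ∧ A.bracket u x = 0}
  add_mem' := by
    intro a b ha hb u hu
    refine ⟨?_, ?_⟩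
    · rw [map_add, LinearMap.add_apply, (ha u hu).1, (hb u hu).1, add_zero]
    · rw [map_add, (ha u hu).2, (hb u hu).2, add_zero]
  zero_mem' := by
    intro u hu
    refine ⟨?_, ?_⟩
    · rw [map_zero, LinearMap.zero_apply]
    · rw [map_zero]
  smul_mem' := by
    intro c a ha u hu
    refine ⟨?_, ?_⟩
    · rw [map_smul, LinearMap.smul_apply, (ha u hu).1, smul_zero]
    · rw [map_smul, (ha u hu).2, smul_zero]

/-- The centre of the subalgebra `M`: elements of `M` centralizing `M`. -/
def centerOf (A : LeibnizAlg F L) (M : Submodule F L) : Submodule F L :=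
  M ⊓ A.centralizer M

/-- `N` is the nilradical: the largest nilpotent ideal. -/
def IsNilradical (A : LeibnizAlg F L) (N : Submodule F L) : Prop :=
  A.IsIdeal N ∧ A.IsNilpotentSub N ∧
    ∀ I : Submodule F L, A.IsIdeal I → A.IsNilpotentSub I → I ≤ N

/-- A minimal ideal: a nonzero ideal containing no ideal other than `0` and itself. -/
def IsMinimalIdeal (A : LeibnizAlg F L) (I : Submodule F L) : Prop :=
  A.IsIdeal I ∧ I ≠ ⊥ ∧ ∀ J : Submodule F L, A.IsIdeal J → J ≤ I → J = ⊥ ∨ J = I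

/-- A maximal subalgebra. -/
def IsMaximalSubalgebra (A : LeibnizAlg F L) (M : Submodule F L) : Prop :=
  A.IsSubalgebra M ∧ M ≠ ⊤ ∧
    ∀ S : Submodule F L, A.IsSubalgebra S → M ≤ S → S = M ∨ S = ⊤

/-- `L` is φ-free: every ideal contained in all maximal subalgebras is zero. -/
def IsPhiFree (A : LeibnizAlg F L) : Prop :=
  ∀ I : Submodule F L, A.IsIdeal I →
    (∀ M : Submodule F L, A.IsMaximalSubalgebra M → I ≤ M) → I = ⊥

/-- `Asoc L`: the sum of the abelian minimal ideals. -/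
def asoc (A : LeibnizAlg F L) : Submodule F L :=
  sSup {I : Submodule F L | A.IsMinimalIdeal I ∧ A.IsAbelian I}

/-- A Cartan subalgebra: a nilpotent, self-normalizing subalgebra. -/
def IsCartan (A : LeibnizAlg F L) (C : Submodule F L) : Prop :=
  A.IsSubalgebra C ∧ A.IsNilpotentSub C ∧
    ∀ x : L, (∀ c ∈ C, A.bracket x c ∈ C ∧ A.bracket c x ∈ C) → x ∈ C

/-- A maximal nilpotent subalgebra. -/
def IsMaxNilpotentSubalgebra (A : LeibnizAlg F L) (U : Submodule F L) : Prop :=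
  A.IsSubalgebra U ∧ A.IsNilpotentSub U ∧
    ∀ V : Submodule F L, A.IsSubalgebra V → A.IsNilpotentSub V → U ≤ V → V = U

end LeibnizAlg

theorem Module.End.exists_mem_pow_apply_add_apply_eq_zero {R M : Type*} [Ring R] [AddCommGroup M]
    [Module R M] (f : Module.End R M) {p : Submodule R M} [IsArtinian R p]
    (hp : ∀ x ∈ p, f x ∈ p) {a : M} (ha : a ∈ p) :
    ∃ c ∈ p, ∃ m : ℕ, (f ^ m) (a + f c) = 0 := by
  set g := f.restrict hp
  obtain ⟨N, hN⟩ := g.eventually_codisjoint_ker_pow_range_pow.exists_forall_of_atTop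
  have hmem : (⟨a, ha⟩ : p) ∈ LinearMap.ker (g ^ (N + 1)) ⊔ LinearMap.range (g ^ (N + 1)) :=
    (hN (N + 1) N.le_succ).eq_top ▸ Submodule.mem_top
  obtain ⟨k, hk, _, ⟨b, rfl⟩, hkb⟩ := Submodule.mem_sup.1 hmem
  have hc : (⟨a, ha⟩ : p) + g (-(g ^ N) b) = k := by
    rw [← hkb, map_neg, ← Module.End.mul_apply, ← pow_succ', add_neg_cancel_right]
  refine ⟨_, (-(g ^ N) b).2, N + 1, ?_⟩
  have hzero := congrArg Subtype.val (congrArg (g ^ (N + 1)) hc)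
  rw [LinearMap.mem_ker.1 hk, Module.End.pow_restrict, LinearMap.restrict_apply] at hzero
  simpa only [g, Submodule.coe_add, LinearMap.coe_restrict_apply, ZeroMemClass.coe_zero] using hzero

namespace LeibnizAlg

open Submodule

variable {F L : Type*} [Field F] [AddCommGroup L] [Module F L] (A : LeibnizAlg F L)

theorem prod_eq_map₂ (M N : Submodule F L) : A.prod M N = map₂ A.bracket M N := by
  rw [map₂_eq_span_image2, prod]
  congr 1
  ext z
  simp [Set.mem_image2, eq_comm]

theorem mem_prod {M N : Submodule F L} {m n : L} (hm : m ∈ M) (hn : n ∈ N) :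
    A.bracket m n ∈ A.prod M N :=
  subset_span ⟨m, hm, n, hn, rfl⟩

theorem prod_le_iff {M N P : Submodule F L} :
    A.prod M N ≤ P ↔ ∀ m ∈ M, ∀ n ∈ N, A.bracket m n ∈ P := by
  rw [prod_eq_map₂]
  exact map₂_le

theorem prod_mono {M M' N N' : Submodule F L} (hM : M ≤ M') (hN : N ≤ N') :
    A.prod M N ≤ A.prod M' N' := by
  simp only [prod_eq_map₂]
  exact map₂_le_map₂ hM hN

theorem prod_eq_bot_iff {M N : Submodule F L} :
    A.prod M N = ⊥ ↔ ∀ m ∈ M, ∀ n ∈ N, A.bracket m n = 0 := by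
  simp only [← le_bot_iff, prod_le_iff, mem_bot]

theorem bracket_eq_zero_of_prod_eq_bot {M N : Submodule F L} (h : A.prod M N = ⊥) {m n : L}
    (hm : m ∈ M) (hn : n ∈ N) : A.bracket m n = 0 :=
  A.prod_eq_bot_iff.1 h m hm n hn

@[simp]
theorem prod_bot_left (N : Submodule F L) : A.prod ⊥ N = ⊥ := by
  rw [prod_eq_map₂, map₂_bot_left]

@[simp]
theorem prod_bot_right (M : Submodule F L) : A.prod M ⊥ = ⊥ := by
  rw [prod_eq_map₂, map₂_bot_right]

theorem prod_span_span_le {S S' : Set L} {P : Submodule F L}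
    (h : ∀ a ∈ S, ∀ b ∈ S', A.bracket a b ∈ P) : A.prod (span F S) (span F S') ≤ P := by
  rw [prod_eq_map₂, map₂_span_span, span_le]
  rintro _ ⟨a, ha, b, hb, rfl⟩
  exact h a ha b hb

section Ideal

variable {A}

theorem IsIdeal.isSubalgebra {B : Submodule F L} (hB : A.IsIdeal B) : A.IsSubalgebra B :=
  (A.prod_mono le_rfl le_top).trans hB.1

theorem IsIdeal.prod_le_inf {B D : Submodule F L} (hB : A.IsIdeal B) (hD : A.IsIdeal D) :
    A.prod B D ≤ B ⊓ D :=
  le_inf ((A.prod_mono le_rfl le_top).trans hB.1) ((A.prod_mono le_top le_rfl).trans hD.2)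

end Ideal

theorem centralizer_anti {M N : Submodule F L} (h : M ≤ N) :
    A.centralizer N ≤ A.centralizer M :=
  fun _ hx u hu => hx u (h hu)

theorem centralizer_inf_le_centralizer_sup {M N : Submodule F L} :
    A.centralizer M ⊓ A.centralizer N ≤ A.centralizer (M ⊔ N) := by
  rintro x ⟨hM, hN⟩ u hu
  obtain ⟨y, hy, z, hz, rfl⟩ := mem_sup.1 hu
  simp only [map_add, LinearMap.add_apply, (hM y hy).1, (hM y hy).2, (hN z hz).1, (hN z hz).2,
    add_zero, and_self]

variable {A} in
theorem IsAAlgebra.isAbelian_of_prod_le_centerOf (hA : A.IsAAlgebra) {T : Submodule F L}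
    (h : A.prod T T ≤ A.centerOf T) : A.IsAbelian T := by
  refine hA T (h.trans inf_le_left) ⟨2, A.prod_eq_bot_iff.2 ?_⟩
  intro z hz t ht
  exact ((h hz).2 t ht).1

variable {A} in
theorem IsAAlgebra.bracket_eq_zero_of_mem_centerOf (hA : A.IsAAlgebra) {U : Submodule F L}
    {x y : L} (hx : x ∈ U) (hy : y ∈ U) (hxx : A.bracket x x = 0) (hyy : A.bracket y y = 0)
    (hxy : A.bracket x y ∈ A.centerOf U) (hyx : A.bracket y x ∈ A.centerOf U) :
    A.bracket x y = 0 ∧ A.bracket y x = 0 := by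
  set T := span F ({x, y} ∪ (A.centerOf U : Set L))
  have hTU : T ≤ U := span_le.2 <|
    Set.union_subset (Set.insert_subset hx (Set.singleton_subset_iff.2 hy)) fun _ hc => hc.1
  have hTT : A.prod T T ≤ A.centerOf U := by
    refine A.prod_span_span_le fun a ha b hb => ?_
    have haU : a ∈ U := hTU (subset_span ha)
    have hbU : b ∈ U := hTU (subset_span hb)
    rcases hb with hb | hb
    · rcases ha with ha | ha
      · simp only [Set.mem_insert_iff, Set.mem_singleton_iff] at ha hb
        rcases ha with rfl | rfl <;> rcases hb with rfl | rfl <;>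
          simp only [hxx, hyy, hxy, hyx, zero_mem]
      · rw [(ha.2 b hbU).1]
        exact zero_mem _
    · rw [(hb.2 a haU).2]
      exact zero_mem _
  have hZT : A.centerOf U ≤ A.centerOf T :=
    fun c hc => ⟨subset_span (Or.inr hc), A.centralizer_anti hTU hc.2⟩
  have hT := hA.isAbelian_of_prod_le_centerOf (hTT.trans hZT)
  have hxT : x ∈ T := subset_span (Or.inl (Set.mem_insert x _))
  have hyT : y ∈ T := subset_span (Or.inl (Or.inr rfl))
  exact ⟨A.bracket_eq_zero_of_prod_eq_bot hT hxT hyT,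
    A.bracket_eq_zero_of_prod_eq_bot hT hyT hxT⟩

def rightMul : L →ₗ[F] Module.End F L := A.bracket.flip

theorem rightMul_apply (x y : L) : A.rightMul x y = A.bracket y x := rfl

def rightPow (x : L) (k : ℕ) : L := (A.rightMul x ^ k) x

theorem rightPow_zero (x : L) : A.rightPow x 0 = x := by
  rw [rightPow, pow_zero, Module.End.one_apply]

theorem rightPow_one (x : L) : A.rightPow x 1 = A.rightMul x x := by
  rw [rightPow, pow_one]

theorem rightPow_succ (x : L) (k : ℕ) :
    A.rightPow x (k + 1) = A.bracket (A.rightPow x k) x := by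
  rw [rightPow, pow_succ', Module.End.mul_apply]
  rfl

theorem bracket_rightPow_succ (x y : L) (k : ℕ) : A.bracket y (A.rightPow x (k + 1)) = 0 := by
  induction k generalizing y with
  | zero => rw [rightPow_succ, rightPow_zero, A.leibniz, sub_self]
  | succ k ih =>
    rw [rightPow_succ, A.leibniz, ih, ih, map_zero, LinearMap.zero_apply, sub_zero]

theorem rightPow_mem {G : Submodule F L} (hG : A.IsSubalgebra G) {x : L} (hx : x ∈ G) (k : ℕ) :
    A.rightPow x k ∈ G := by
  induction k with
  | zero => rwa [rightPow_zero]
  | succ k ih => rw [rightPow_succ]; exact hG (A.mem_prod ih hx)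

def rightPowSpan (x : L) : Submodule F L := span F (Set.range fun k => A.rightPow x (k + 1))

theorem rightPowSpan_le_ker (x : L) : A.rightPowSpan x ≤ LinearMap.ker A.rightMul := by
  refine span_le.2 ?_
  rintro _ ⟨k, rfl⟩
  exact LinearMap.ext fun y => A.bracket_rightPow_succ x y k

theorem rightPowSpan_le_prod {G : Submodule F L} (hG : A.IsSubalgebra G) {x : L} (hx : x ∈ G) :
    A.rightPowSpan x ≤ A.prod G G := by
  refine span_le.2 ?_
  rintro _ ⟨k, rfl⟩
  simp only [SetLike.mem_coe, rightPow_succ]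
  exact A.mem_prod (A.rightPow_mem hG hx k) hx

theorem rightPowSpan_le_comap_rightMul (x : L) :
    A.rightPowSpan x ≤ (A.rightPowSpan x).comap (A.rightMul x) := by
  refine span_le.2 ?_
  rintro _ ⟨k, rfl⟩
  rw [SetLike.mem_coe, mem_comap, rightMul_apply, ← rightPow_succ]
  exact subset_span ⟨k + 1, rfl⟩

theorem exists_rightPow_add_eq_zero [FiniteDimensional F L] (x : L) :
    ∃ c ∈ A.rightPowSpan x, ∃ m, A.rightPow (x + c) m = 0 := by
  have hx : A.rightMul x x ∈ A.rightPowSpan x := by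
    rw [← rightPow_one]
    exact subset_span ⟨0, rfl⟩
  obtain ⟨c, hc, m, hm⟩ := (A.rightMul x).exists_mem_pow_apply_add_apply_eq_zero
    (p := A.rightPowSpan x) (fun _ hy => A.rightPowSpan_le_comap_rightMul x hy) hx
  refine ⟨c, hc, m + 1, ?_⟩
  rw [rightPow, map_add A.rightMul, LinearMap.mem_ker.1 (A.rightPowSpan_le_ker x hc), add_zero,
    pow_succ, Module.End.mul_apply, map_add]
  exact hm

variable {A} in
theorem IsAAlgebra.bracket_self_eq_zero_of_rightPow_eq_zero (hA : A.IsAAlgebra) {x : L} {m : ℕ}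
    (hm : A.rightPow x m = 0) : A.bracket x x = 0 := by
  set K := span F (Set.range (A.rightPow x))
  have hstep : ∀ j, A.prod (span F (Set.range fun k => A.rightPow x (k + j))) K ≤
      span F (Set.range fun k => A.rightPow x (k + j + 1)) := by
    intro j
    refine A.prod_span_span_le ?_
    rintro _ ⟨k, rfl⟩ _ ⟨i, rfl⟩
    cases i with
    | zero =>
      rw [rightPow_zero, ← rightPow_succ]
      exact subset_span ⟨k, rfl⟩
    | succ i =>
      rw [bracket_rightPow_succ]
      exact zero_mem _
  have hlcs : ∀ j, A.lcs K j ≤ span F (Set.range fun k => A.rightPow x (k + j)) := by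
    intro j
    induction j with
    | zero => exact le_rfl
    | succ j ih => exact (A.prod_mono ih le_rfl).trans (hstep j)
  have hK : A.IsSubalgebra K :=
    (hstep 0).trans (span_mono (Set.range_subset_iff.2 fun k => ⟨k + 1, rfl⟩))
  have hKnil : A.IsNilpotentSub K := by
    refine ⟨m, le_bot_iff.1 ((hlcs m).trans (span_le.2 ?_))⟩
    rintro _ ⟨k, rfl⟩
    show A.rightPow x (k + m) = 0
    rw [rightPow, pow_add, Module.End.mul_apply, ← rightPow, hm, map_zero]
  exact A.bracket_eq_zero_of_prod_eq_bot (hA K hK hKnil) (subset_span ⟨0, rfl⟩)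
    (subset_span ⟨0, rfl⟩)

variable {A} in
theorem IsAAlgebra.exists_add_bracket_self_eq_zero [FiniteDimensional F L] (hA : A.IsAAlgebra)
    {G : Submodule F L} (hG : A.IsSubalgebra G) {x : L} (hx : x ∈ G) :
    ∃ c ∈ A.prod G G, A.rightMul c = 0 ∧ A.bracket (x + c) (x + c) = 0 := by
  obtain ⟨c, hc, m, hm⟩ := A.exists_rightPow_add_eq_zero x
  exact ⟨c, A.rightPowSpan_le_prod hG hx hc, A.rightPowSpan_le_ker x hc,
    hA.bracket_self_eq_zero_of_rightPow_eq_zero hm⟩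

variable {A} in
theorem IsAAlgebra.prod_eq_bot_of_prod_prod_eq_bot [FiniteDimensional F L] (hA : A.IsAAlgebra)
    {G H U : Submodule F L} (hG : A.IsSubalgebra G) (hH : A.IsSubalgebra H) (hGU : G ≤ U)
    (hHU : H ≤ U) (hGGH : A.prod (A.prod G G) H = ⊥) (hHHG : A.prod (A.prod H H) G = ⊥)
    (hGH : A.prod G H ≤ A.centerOf U) (hHG : A.prod H G ≤ A.centerOf U) :
    A.prod G H = ⊥ ∧ A.prod H G = ⊥ := by
  suffices key : ∀ g ∈ G, ∀ h ∈ H, A.bracket g h = 0 ∧ A.bracket h g = 0 from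
    ⟨A.prod_eq_bot_iff.2 fun g hg h hh => (key g hg h hh).1,
      A.prod_eq_bot_iff.2 fun h hh g hg => (key g hg h hh).2⟩
  intro g hg h hh
  obtain ⟨c, hcG, hc, hv⟩ := hA.exists_add_bracket_self_eq_zero hG hg
  obtain ⟨e, heH, he, hw⟩ := hA.exists_add_bracket_self_eq_zero hH hh
  have hvw : A.bracket (g + c) (h + e) = A.bracket g h := by
    rw [← rightMul_apply, map_add A.rightMul, he, add_zero, rightMul_apply, map_add,
      LinearMap.add_apply, A.bracket_eq_zero_of_prod_eq_bot hGGH hcG hh, add_zero]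
  have hwv : A.bracket (h + e) (g + c) = A.bracket h g := by
    rw [← rightMul_apply, map_add A.rightMul, hc, add_zero, rightMul_apply, map_add,
      LinearMap.add_apply, A.bracket_eq_zero_of_prod_eq_bot hHHG heH hg, add_zero]
  have hvU : g + c ∈ U := hGU (G.add_mem hg (hG hcG))
  have hwU : h + e ∈ U := hHU (H.add_mem hh (hH heH))
  rw [← hvw, ← hwv]
  exact hA.bracket_eq_zero_of_mem_centerOf hvU hwU hv hw (hvw ▸ hGH (A.mem_prod hg hh))
    (hwv ▸ hHG (A.mem_prod hh hg))

theorem derSeries_succ_le (k : ℕ) : A.derSeries (k + 1) ≤ A.derSeries k := by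
  induction k with
  | zero => exact le_top
  | succ k ih => exact A.prod_mono ih ih

theorem derSeries_eq_bot_of_le {n k : ℕ} (hn : A.derSeries n = ⊥) (hk : n ≤ k) :
    A.derSeries k = ⊥ :=
  le_bot_iff.1 (hn ▸ antitone_nat_of_succ_le A.derSeries_succ_le hk)

section Subalgebra

variable {A} {B : Submodule F L}

theorem IsSubalgebra.prod_inf_derSeries_le (hB : A.IsSubalgebra B) (k : ℕ) :
    A.prod (B ⊓ A.derSeries k) (B ⊓ A.derSeries k) ≤ B ⊓ A.derSeries (k + 1) :=
  le_inf ((A.prod_mono inf_le_left inf_le_left).trans hB) (A.prod_mono inf_le_right inf_le_right)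

theorem IsSubalgebra.inf_derSeries (hB : A.IsSubalgebra B) (k : ℕ) :
    A.IsSubalgebra (B ⊓ A.derSeries k) :=
  (hB.prod_inf_derSeries_le k).trans (inf_le_inf_left B (A.derSeries_succ_le k))

end Subalgebra

variable {A} in
theorem IsAAlgebra.prod_eq_bot_of_isSolvable [FiniteDimensional F L] (hA : A.IsAAlgebra)
    (hsolv : A.IsSolvable) {B D U : Submodule F L} (hB : A.IsSubalgebra B)
    (hD : A.IsSubalgebra D) (hBU : B ≤ U) (hDU : D ≤ U) (hBD : A.prod B D ≤ A.centerOf U)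
    (hDB : A.prod D B ≤ A.centerOf U) : A.prod B D = ⊥ ∧ A.prod D B = ⊥ := by
  obtain ⟨n, hn⟩ := hsolv
  have key : ∀ i k l, 2 * n ≤ k + l + i →
      A.prod (B ⊓ A.derSeries k) (D ⊓ A.derSeries l) = ⊥ ∧
        A.prod (D ⊓ A.derSeries l) (B ⊓ A.derSeries k) = ⊥ := by
    intro i
    induction i with
    | zero =>
      intro k l hkl
      rcases le_or_gt n k with hk | hk
      · simp [A.derSeries_eq_bot_of_le hn hk]
      · simp [A.derSeries_eq_bot_of_le hn (show n ≤ l by omega)]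
    | succ i ih =>
      intro k l hkl
      refine hA.prod_eq_bot_of_prod_prod_eq_bot (hB.inf_derSeries k) (hD.inf_derSeries l)
        (inf_le_left.trans hBU) (inf_le_left.trans hDU) ?_ ?_
        ((A.prod_mono inf_le_left inf_le_left).trans hBD)
        ((A.prod_mono inf_le_left inf_le_left).trans hDB)
      · exact le_bot_iff.1 <| (A.prod_mono (hB.prod_inf_derSeries_le k) le_rfl).trans
          (ih (k + 1) l (by omega)).1.le
      · exact le_bot_iff.1 <| (A.prod_mono (hD.prod_inf_derSeries_le l) le_rfl).trans
          (ih k (l + 1) (by omega)).2.le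
  simpa [derSeries] using key (2 * n) 0 0 (by omega)

end LeibnizAlg

/-- Let `L` be a solvable Leibniz A-algebra and `B`, `D` ideals of `L`.
Then `B ⊆ Z_L(D)` if and only if `B ∩ D ⊆ Z(B) ∩ Z(D)`. -/
theorem ideal_centralizes_iff
    {F L : Type*} [Field F] [AddCommGroup L] [Module F L] [FiniteDimensional F L]
    (A : LeibnizAlg F L) (hA : A.IsAAlgebra) (hsolv : A.IsSolvable)
    (B D : Submodule F L) (hB : A.IsIdeal B) (hD : A.IsIdeal D) :
    B ≤ A.centralizer D ↔ B ⊓ D ≤ A.centerOf B ⊓ A.centerOf D := by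
  constructor
  · intro h x hx
    exact ⟨⟨hx.1, fun u hu => (h hu x hx.2).symm⟩, hx.2, h hx.1⟩
  · intro h
    have hcentral : B ⊓ D ≤ A.centerOf (B ⊔ D) := fun x hx =>
      ⟨Submodule.mem_sup_left hx.1,
        A.centralizer_inf_le_centralizer_sup ⟨(h hx).1.2, (h hx).2.2⟩⟩
    obtain ⟨hBD, hDB⟩ := hA.prod_eq_bot_of_isSolvable hsolv hB.isSubalgebra hD.isSubalgebra
      le_sup_left le_sup_right ((hB.prod_le_inf hD).trans hcentral)
      ((hD.prod_le_inf hB).trans (inf_comm B D ▸ hcentral))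
    exact fun x hx u hu =>
      ⟨A.bracket_eq_zero_of_prod_eq_bot hBD hx hu, A.bracket_eq_zero_of_prod_eq_bot hDB hu hx⟩
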